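/- Let q > 0 and define Ψ : ℝ → ℝ as follows: for x ∈ ℝ, letting k = ⌊|x|/q⌋ ∈ ℕ, set Ψ(x) = |x| − kq/2 if kq ≤ |x| ≤ (2k+1)q/2, and Ψ(x) = (k+1)q/2 if (2k+1)q/2 ≤ |x| ≤ (k+1)q. Then: (i) |x|/2 ≤ Ψ(x) ≤ |x| for all x ∈ ℝ; (ii) Ψ is Lipschitz with constant 1; and (iii) Ψ is quasiconvex, i.e., Ψ(t·x + (1−t)·y) ≤ max(Ψ(x), Ψ(y)) for all x, y ∈ ℝ and t ∈ [0, 1]. -/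

import Mathlib

/-!
For `u ≥ 0` and `k = ⌊u/q⌋` one has `Ψ u = min (u - kq/2) ((k+1)q/2)`. Both `Ψ` and `u ↦ u - Ψ u`
are nondecreasing on each cell `[kq, (k+1)q)` and take values in the band `[kq/2, (k+1)q/2]`,
hence are nondecreasing on `[0, ∞)`; the second fact makes `Ψ` 1-Lipschitz there. Since
`Ψ x = Ψ |x|` and `|·|` is convex, monotonicity on `[0, ∞)` also gives quasiconvexity.
-/

/-- The quasiconvex piecewise-affine regularizer with uniformly spaced quantization
values `Q = {0, ±q, ±2q, …}`: with `k = ⌊|x|/q⌋`, it equals `|x| − kq/2` on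
`[kq, (2k+1)q/2]` and `(k+1)q/2` on `[(2k+1)q/2, (k+1)q]`. -/
noncomputable def quasiconvexPAR (q : ℝ) (x : ℝ) : ℝ :=
  if |x| ≤ (2 * (⌊|x| / q⌋₊ : ℝ) + 1) * q / 2 then
    |x| - (⌊|x| / q⌋₊ : ℝ) * q / 2
  else
    ((⌊|x| / q⌋₊ : ℝ) + 1) * q / 2

open Set

theorem monotoneOn_of_bands {α β : Type*} [Preorder α] [Preorder β] {s : Set α} {f : α → β}
    {n : α → ℕ} {b : ℕ → β} (hn : MonotoneOn n s) (hb : Monotone b)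
    (hband : ∀ u ∈ s, b (n u) ≤ f u ∧ f u ≤ b (n u + 1))
    (hcell : ∀ u ∈ s, ∀ v ∈ s, u ≤ v → n u = n v → f u ≤ f v) :
    MonotoneOn f s := by
  intro u hu v hv huv
  rcases (hn hu hv huv).eq_or_lt with hnuv | hnuv
  · exact hcell u hu v hv huv hnuv
  · calc f u ≤ b (n u + 1) := (hband u hu).2
      _ ≤ b (n v) := hb hnuv
      _ ≤ f v := (hband v hv).1

theorem abs_sub_le_of_monotoneOn_sub {α : Type*} [AddCommGroup α] [LinearOrder α]
    [IsOrderedAddMonoid α] {s : Set α} {f : α → α} (hf : MonotoneOn f s)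
    (hf' : MonotoneOn (fun u => u - f u) s) {u v : α} (hu : u ∈ s) (hv : v ∈ s) :
    |f u - f v| ≤ |u - v| := by
  wlog huv : u ≤ v generalizing u v
  · rw [abs_sub_comm, abs_sub_comm u]
    exact this hv hu (le_of_not_ge huv)
  have hfuv := hf hu hv huv
  have hfuv' : u - f u ≤ v - f v := hf' hu hv huv
  rw [abs_sub_comm, abs_sub_comm u, abs_of_nonneg (sub_nonneg.2 hfuv),
    abs_of_nonneg (sub_nonneg.2 huv), sub_le_sub_iff, add_comm]
  rwa [sub_le_sub_iff] at hfuv'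

theorem quasiconvexOn_comp_abs {φ : ℝ → ℝ} (hφ : MonotoneOn φ (Ici 0)) :
    QuasiconvexOn ℝ univ (fun x => φ |x|) := by
  refine quasiconvexOn_iff_le_max.2 ⟨convex_univ, fun x _ y _ a b ha hb hab => ?_⟩
  have hcombo : |a • x + b • y| ≤ max |x| |y| := by
    simpa only [Real.norm_eq_abs] using
      convexOn_univ_norm.le_on_segment' (mem_univ x) (mem_univ y) ha hb hab
  calc φ |a • x + b • y| ≤ φ (max |x| |y|) :=
        hφ (mem_Ici.2 (abs_nonneg _)) ((abs_nonneg x).trans (le_max_left _ _)) hcombo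
    _ = max (φ |x|) (φ |y|) := hφ.map_max (abs_nonneg x) (abs_nonneg y)

theorem Nat.floor_div_mul_le_and_lt {K : Type*} [Field K] [LinearOrder K]
    [IsStrictOrderedRing K] [FloorSemiring K] {q u : K} (hq : 0 < q) (hu : 0 ≤ u) :
    (⌊u / q⌋₊ : K) * q ≤ u ∧ u < ((⌊u / q⌋₊ : K) + 1) * q :=
  ⟨(le_div_iff₀ hq).1 (Nat.floor_le (div_nonneg hu hq.le)),
    (div_lt_iff₀ hq).1 (Nat.lt_floor_add_one _)⟩

theorem Nat.monotone_floor_div {K : Type*} [Field K] [LinearOrder K]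
    [IsStrictOrderedRing K] [FloorSemiring K] {q : K} (hq : 0 ≤ q) :
    Monotone fun u : K => ⌊u / q⌋₊ :=
  fun _ _ h => Nat.floor_le_floor (div_le_div_of_nonneg_right h hq)

theorem quasiconvexPAR_abs (q x : ℝ) : quasiconvexPAR q |x| = quasiconvexPAR q x := by
  simp only [quasiconvexPAR, abs_abs]

section

variable {q u : ℝ}

theorem quasiconvexPAR_of_nonneg (hu : 0 ≤ u) :
    quasiconvexPAR q u = min (u - (⌊u / q⌋₊ : ℝ) * q / 2) (((⌊u / q⌋₊ : ℝ) + 1) * q / 2) := by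
  unfold quasiconvexPAR
  rw [abs_of_nonneg hu]
  split_ifs with h
  · exact (min_eq_left (by linarith)).symm
  · exact (min_eq_right (by linarith)).symm

theorem quasiconvexPAR_mem_band (hq : 0 < q) (hu : 0 ≤ u) :
    (⌊u / q⌋₊ : ℝ) * q / 2 ≤ quasiconvexPAR q u ∧
      quasiconvexPAR q u ≤ ((⌊u / q⌋₊ : ℝ) + 1) * q / 2 := by
  obtain ⟨hlo, hhi⟩ := Nat.floor_div_mul_le_and_lt hq hu
  rw [quasiconvexPAR_of_nonneg hu]
  exact ⟨le_min (by linarith) (by linarith), min_le_right _ _⟩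

theorem sub_quasiconvexPAR_mem_band (hq : 0 < q) (hu : 0 ≤ u) :
    (⌊u / q⌋₊ : ℝ) * q / 2 ≤ u - quasiconvexPAR q u ∧
      u - quasiconvexPAR q u ≤ ((⌊u / q⌋₊ : ℝ) + 1) * q / 2 := by
  obtain ⟨hlo, hhi⟩ := Nat.floor_div_mul_le_and_lt hq hu
  rw [quasiconvexPAR_of_nonneg hu]
  rcases min_cases (u - (⌊u / q⌋₊ : ℝ) * q / 2) (((⌊u / q⌋₊ : ℝ) + 1) * q / 2) with
    ⟨hmin, _⟩ | ⟨hmin, _⟩ <;> rw [hmin] <;> constructor <;> linarith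

theorem half_le_quasiconvexPAR_and_le (hq : 0 < q) (hu : 0 ≤ u) :
    u / 2 ≤ quasiconvexPAR q u ∧ quasiconvexPAR q u ≤ u := by
  obtain ⟨hlo, hhi⟩ := Nat.floor_div_mul_le_and_lt hq hu
  have hk : (0 : ℝ) ≤ (⌊u / q⌋₊ : ℝ) * q := by positivity
  rw [quasiconvexPAR_of_nonneg hu]
  exact ⟨le_min (by linarith) (by linarith), (min_le_left _ _).trans (by linarith)⟩

theorem monotoneOn_Ici_of_floor_div_bands (hq : 0 ≤ q) {f : ℝ → ℝ}
    (hband : ∀ u, 0 ≤ u → (⌊u / q⌋₊ : ℝ) * q / 2 ≤ f u ∧ f u ≤ ((⌊u / q⌋₊ : ℝ) + 1) * q / 2)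
    (hcell : ∀ u, 0 ≤ u → ∀ v, u ≤ v → ⌊u / q⌋₊ = ⌊v / q⌋₊ → f u ≤ f v) :
    MonotoneOn f (Ici 0) :=
  monotoneOn_of_bands ((Nat.monotone_floor_div hq).monotoneOn _)
    (b := fun k : ℕ => (k : ℝ) * q / 2) (fun _ _ h => by dsimp only; gcongr)
    (fun u hu => by exact_mod_cast hband u hu) fun u hu _ _ huv => hcell u hu _ huv

theorem monotoneOn_quasiconvexPAR (hq : 0 < q) : MonotoneOn (quasiconvexPAR q) (Ici 0) := by
  refine monotoneOn_Ici_of_floor_div_bands hq.le (fun u hu => quasiconvexPAR_mem_band hq hu)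
    fun u hu v huv hk => ?_
  rw [quasiconvexPAR_of_nonneg hu, quasiconvexPAR_of_nonneg (hu.trans huv), hk]
  exact min_le_min_right _ (by linarith)

theorem monotoneOn_sub_quasiconvexPAR (hq : 0 < q) :
    MonotoneOn (fun u => u - quasiconvexPAR q u) (Ici 0) := by
  refine monotoneOn_Ici_of_floor_div_bands hq.le (fun u hu => sub_quasiconvexPAR_mem_band hq hu)
    fun u hu v huv hk => ?_
  rw [quasiconvexPAR_of_nonneg hu, quasiconvexPAR_of_nonneg (hu.trans huv), hk]
  have hmin : min (v - (⌊v / q⌋₊ : ℝ) * q / 2) (((⌊v / q⌋₊ : ℝ) + 1) * q / 2) ≤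
      min (u - (⌊v / q⌋₊ : ℝ) * q / 2) (((⌊v / q⌋₊ : ℝ) + 1) * q / 2) + (v - u) := by
    rw [← min_add_add_right]
    exact min_le_min (by linarith) (by linarith)
  linarith

end

/-- Example 4.2: the quasiconvex PAR satisfies the linear growth bound
`|x|/2 ≤ Ψ(x) ≤ |x|`, is 1-Lipschitz, and is quasiconvex. -/
theorem quasiconvex_par_properties (q : ℝ) (hq : 0 < q) :
    (∀ x : ℝ, |x| / 2 ≤ quasiconvexPAR q x ∧ quasiconvexPAR q x ≤ |x|) ∧
    (∀ x y : ℝ, |quasiconvexPAR q x - quasiconvexPAR q y| ≤ |x - y|) ∧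
    (∀ x y t : ℝ, 0 ≤ t → t ≤ 1 →
      quasiconvexPAR q (t * x + (1 - t) * y) ≤
        max (quasiconvexPAR q x) (quasiconvexPAR q y)) := by
  refine ⟨fun x => ?_, fun x y => ?_, fun x y t ht ht1 => ?_⟩
  · rw [← quasiconvexPAR_abs q x]
    exact half_le_quasiconvexPAR_and_le hq (abs_nonneg x)
  · rw [← quasiconvexPAR_abs q x, ← quasiconvexPAR_abs q y]
    exact (abs_sub_le_of_monotoneOn_sub (monotoneOn_quasiconvexPAR hq)
      (monotoneOn_sub_quasiconvexPAR hq) (abs_nonneg x) (abs_nonneg y)).trans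
      (abs_abs_sub_abs_le_abs_sub x y)
  · have hqc : QuasiconvexOn ℝ univ (quasiconvexPAR q) := by
      simpa only [quasiconvexPAR_abs] using
        quasiconvexOn_comp_abs (monotoneOn_quasiconvexPAR hq)
    exact (quasiconvexOn_iff_le_max.1 hqc).2 (mem_univ x) (mem_univ y) ht (sub_nonneg.2 ht1)
      (add_sub_cancel t 1)
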